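/- Let 𝔤 be the 4-dimensional real Lie algebra with basis X₁, X₂, Y₁, Y₂ whose only nonvanishing bracket among basis elements is [Y₁, Y₂] = X₂. Let Ω be the alternating bilinear form with Ω(X₁,Y₁) = Ω(X₂,Y₂) = 1 and Ω vanishing on all other pairs of distinct basis elements, and let j be the linear map with jX_i = Y_i and jY_i = −X_i (i = 1, 2). Then Ω is a nondegenerate 2-cocycle, j is a positive compatible complex structure, the span of the image of N^j equals span{X₂, Y₂}, this span is involutive, its Ω-orthogonal complement equals span{X₁, Y₁}, and that complement is involutive. -/

import Mathlib

/-- The algebraic Nijenhuis tensor of a linear map `j` on a Lie algebra. -/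
def algNijenhuis {𝔤 : Type*} [LieRing 𝔤] [LieAlgebra ℝ 𝔤] (j : 𝔤 →ₗ[ℝ] 𝔤) (X Y : 𝔤) : 𝔤 :=
  ⁅j X, j Y⁆ - j ⁅j X, Y⁆ - j ⁅X, j Y⁆ - ⁅X, Y⁆

/-- A subspace `W` of a Lie algebra is involutive if `⁅W, W⁆ ⊆ W`. -/
def IsInvolutive {𝔤 : Type*} [LieRing 𝔤] [LieAlgebra ℝ 𝔤] (W : Set 𝔤) : Prop :=
  ∀ u ∈ W, ∀ v ∈ W, ⁅u, v⁆ ∈ W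

/-!
In the coordinates of `b` the bracket is `⁅X, Y⁆ = (x₂y₃ - x₃y₂) • X₂`, `Ω` is the standard
symplectic form and `j` the standard complex structure, so `Ω X (j X)` is the sum of the squares of
the coordinates of `X`; this gives positivity and hence nondegeneracy. The cocycle sum
`Ω ⁅X, Y⁆ Z + …` is a determinant with a repeated column. All brackets lie in the `j`-stable plane
`span {X₂, Y₂} = span {X₂, j X₂}`, which therefore contains the image of `N^j` and is an ideal;
conversely `N^j(X₁, X₂) = X₂` and `N^j(X₁, Y₂) = -Y₂`. Finally `X₁` and `Y₁` commute and span the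
`Ω`-orthogonal of `span {X₂, Y₂}`.
-/

open Module Submodule

theorem Module.Basis.sum_sq_repr_pos {ι M : Type*} [Fintype ι] [AddCommGroup M] [Module ℝ M]
    (b : Basis ι ℝ M) {x : M} (hx : x ≠ 0) : 0 < ∑ i, b.repr x i ^ 2 := by
  obtain ⟨i, hi⟩ : ∃ i, b.repr x i ≠ 0 := by
    by_contra! h
    exact hx (b.repr.injective (Finsupp.ext fun i => by simp [h i]))
  exact Finset.sum_pos' (fun _ _ => sq_nonneg _) ⟨i, Finset.mem_univ _, by positivity⟩

theorem eq_zero_of_forall_apply_eq_zero_of_pos {M : Type*} [AddCommGroup M] [Module ℝ M]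
    (Ω : M →ₗ[ℝ] M →ₗ[ℝ] ℝ) (j : M →ₗ[ℝ] M) (hpos : ∀ X, X ≠ 0 → 0 < Ω X (j X))
    {X : M} (hX : ∀ Y, Ω X Y = 0) : X = 0 := by
  by_contra hne
  simpa [hX] using hpos X hne

theorem forall_mem_span_apply_eq_zero_iff {R M : Type*} [CommRing R] [AddCommGroup M] [Module R M]
    (Ω : M →ₗ[R] M →ₗ[R] R) (S : Set M) (x : M) :
    (∀ w ∈ span R S, Ω w x = 0) ↔ ∀ w ∈ S, Ω w x = 0 := by
  have h := span_le (R := R) (s := S) (p := LinearMap.ker (Ω.flip x))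
  simp only [SetLike.le_def, Set.subset_def, SetLike.mem_coe, LinearMap.mem_ker,
    LinearMap.flip_apply] at h
  exact h

theorem Module.Basis.eq_sum_four {R M : Type*} [Semiring R] [AddCommMonoid M] [Module R M]
    (b : Basis (Fin 4) R M) (X : M) :
    X = b.repr X 0 • b 0 + b.repr X 1 • b 1 + b.repr X 2 • b 2 + b.repr X 3 • b 3 := by
  have h := b.sum_repr X
  rw [Fin.sum_univ_four] at h
  exact h.symm

theorem mem_span_zero_two_iff {R M : Type*} [CommRing R] [AddCommGroup M] [Module R M]
    (b : Basis (Fin 4) R M) {X : M} :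
    X ∈ span R {b 0, b 2} ↔ b.repr X 1 = 0 ∧ b.repr X 3 = 0 := by
  constructor
  · intro hX
    obtain ⟨a, c, rfl⟩ := mem_span_pair.mp hX
    simp
  · rintro ⟨h1, h3⟩
    refine mem_span_pair.mpr ⟨b.repr X 0, b.repr X 2, ?_⟩
    conv_rhs => rw [b.eq_sum_four X, h1, h3]
    module

section LieAlgebra

variable {𝔤 : Type*} [LieRing 𝔤] [LieAlgebra ℝ 𝔤]

theorem algNijenhuis_mem {W : Submodule ℝ 𝔤} {j : 𝔤 →ₗ[ℝ] 𝔤} (hW : ∀ X Y : 𝔤, ⁅X, Y⁆ ∈ W)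
    (hjW : ∀ w ∈ W, j w ∈ W) (X Y : 𝔤) : algNijenhuis j X Y ∈ W :=
  sub_mem (sub_mem (sub_mem (hW _ _) (hjW _ (hW _ _))) (hjW _ (hW _ _))) (hW _ _)

theorem isInvolutive_of_lie_mem {W : Submodule ℝ 𝔤} (hW : ∀ X Y : 𝔤, ⁅X, Y⁆ ∈ W) :
    IsInvolutive (W : Set 𝔤) :=
  fun u _ v _ => hW u v

theorem isInvolutive_span_pair {u v : 𝔤} (huv : ⁅u, v⁆ = 0) :
    IsInvolutive (span ℝ {u, v} : Set 𝔤) := by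
  intro x hx y hy
  obtain ⟨a, c, rfl⟩ := mem_span_pair.mp hx
  obtain ⟨a', c', rfl⟩ := mem_span_pair.mp hy
  have hvu : ⁅v, u⁆ = 0 := by rw [← lie_skew, huv, neg_zero]
  simp [huv, hvu]

end LieAlgebra

section Example

variable {𝔤 : Type*} [LieRing 𝔤] [LieAlgebra ℝ 𝔤] (b : Basis (Fin 4) ℝ 𝔤)

theorem lie_eq_smul_of_basis
    (hbr : ∀ i k : Fin 4, ⁅b i, b k⁆ =
      if i = 2 ∧ k = 3 then b 1 else if i = 3 ∧ k = 2 then -(b 1) else 0) (X Y : 𝔤) :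
    ⁅X, Y⁆ = (b.repr X 2 * b.repr Y 3 - b.repr X 3 * b.repr Y 2) • b 1 := by
  conv_lhs => rw [b.eq_sum_four X, b.eq_sum_four Y]
  simp only [add_lie, lie_add, smul_lie, lie_smul, hbr]
  simp only [Fin.reduceEq, and_self, and_true, and_false, if_true, if_false,
    smul_zero, zero_add, add_zero, smul_neg]
  module

theorem apply_eq_of_basis {Ω : 𝔤 →ₗ[ℝ] 𝔤 →ₗ[ℝ] ℝ}
    (hΩ : ∀ i k : Fin 4, Ω (b i) (b k) = !![0,0,1,0; 0,0,0,1; -1,0,0,0; 0,-1,0,0] i k)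
    (X Y : 𝔤) :
    Ω X Y = b.repr X 0 * b.repr Y 2 + b.repr X 1 * b.repr Y 3
      - b.repr X 2 * b.repr Y 0 - b.repr X 3 * b.repr Y 1 := by
  conv_lhs => rw [b.eq_sum_four X, b.eq_sum_four Y]
  simp only [map_add, map_smul, LinearMap.add_apply, LinearMap.smul_apply, hΩ]
  simp only [Matrix.of_apply, Matrix.cons_val', Matrix.cons_val_zero, Matrix.cons_val_fin_one,
    Matrix.cons_val_one, Matrix.cons_val, smul_eq_mul]
  ring

variable {j : 𝔤 →ₗ[ℝ] 𝔤}

theorem comp_self_eq_neg_id_of_basis (hj0 : j (b 0) = b 2) (hj1 : j (b 1) = b 3)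
    (hj2 : j (b 2) = -(b 0)) (hj3 : j (b 3) = -(b 1)) :
    j ∘ₗ j = -LinearMap.id :=
  b.ext fun i => by fin_cases i <;> simp [hj0, hj1, hj2, hj3]

theorem compl₁₂_eq_of_basis {Ω : 𝔤 →ₗ[ℝ] 𝔤 →ₗ[ℝ] ℝ}
    (hΩ : ∀ i k : Fin 4, Ω (b i) (b k) = !![0,0,1,0; 0,0,0,1; -1,0,0,0; 0,-1,0,0] i k)
    (hj0 : j (b 0) = b 2) (hj1 : j (b 1) = b 3)
    (hj2 : j (b 2) = -(b 0)) (hj3 : j (b 3) = -(b 1)) :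
    Ω.compl₁₂ j j = Ω :=
  LinearMap.ext_basis b b fun i k => by
    fin_cases i <;> fin_cases k <;> simp [hΩ, hj0, hj1, hj2, hj3]

theorem apply_self_apply_eq_sum_sq {Ω : 𝔤 →ₗ[ℝ] 𝔤 →ₗ[ℝ] ℝ}
    (hΩ : ∀ i k : Fin 4, Ω (b i) (b k) = !![0,0,1,0; 0,0,0,1; -1,0,0,0; 0,-1,0,0] i k)
    (hj0 : j (b 0) = b 2) (hj1 : j (b 1) = b 3)
    (hj2 : j (b 2) = -(b 0)) (hj3 : j (b 3) = -(b 1)) (X : 𝔤) :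
    Ω X (j X) = ∑ i, b.repr X i ^ 2 := by
  conv_lhs => rw [b.eq_sum_four X]
  simp only [map_add, map_smul, map_neg, hj0, hj1, hj2, hj3, LinearMap.add_apply,
    LinearMap.smul_apply, hΩ]
  simp only [Matrix.of_apply, Matrix.cons_val', Matrix.cons_val_zero, Matrix.cons_val_fin_one,
    Matrix.cons_val_one, Matrix.cons_val, smul_eq_mul, Fin.sum_univ_four]
  ring

theorem apply_mem_span_one_three (hj1 : j (b 1) = b 3) (hj3 : j (b 3) = -(b 1))
    {w : 𝔤} (hw : w ∈ span ℝ {b 1, b 3}) : j w ∈ span ℝ {b 1, b 3} := by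
  obtain ⟨a, c, rfl⟩ := mem_span_pair.mp hw
  exact mem_span_pair.mpr ⟨-c, a, by simp only [map_add, map_smul, hj1, hj3]; module⟩

end Example

theorem stmt_9 (𝔤 : Type*) [LieRing 𝔤] [LieAlgebra ℝ 𝔤]
    (b : Module.Basis (Fin 4) ℝ 𝔤)
    (hbr : ∀ i k : Fin 4, ⁅b i, b k⁆ =
      if i = 2 ∧ k = 3 then b 1 else if i = 3 ∧ k = 2 then -(b 1) else 0)
    (Ω : 𝔤 →ₗ[ℝ] 𝔤 →ₗ[ℝ] ℝ)
    (hΩ : ∀ i k : Fin 4, Ω (b i) (b k) =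
      !![0,0,1,0; 0,0,0,1; -1,0,0,0; 0,-1,0,0] i k)
    (j : 𝔤 →ₗ[ℝ] 𝔤)
    (hj0 : j (b 0) = b 2) (hj1 : j (b 1) = b 3)
    (hj2 : j (b 2) = -(b 0)) (hj3 : j (b 3) = -(b 1)) :
    (∀ X : 𝔤, (∀ Y : 𝔤, Ω X Y = 0) → X = 0) ∧
    (∀ X Y Z : 𝔤, Ω ⁅X, Y⁆ Z + Ω ⁅Y, Z⁆ X + Ω ⁅Z, X⁆ Y = 0) ∧
    (∀ X : 𝔤, j (j X) = -X) ∧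
    (∀ X Y : 𝔤, Ω (j X) (j Y) = Ω X Y) ∧
    (∀ X : 𝔤, X ≠ 0 → 0 < Ω X (j X)) ∧
    Submodule.span ℝ {v : 𝔤 | ∃ X Y : 𝔤, v = algNijenhuis j X Y} =
      Submodule.span ℝ {b 1, b 3} ∧
    IsInvolutive (↑(Submodule.span ℝ ({b 1, b 3} : Set 𝔤)) : Set 𝔤) ∧
    {x : 𝔤 | ∀ w ∈ Submodule.span ℝ ({b 1, b 3} : Set 𝔤), Ω w x = 0} =
      (↑(Submodule.span ℝ ({b 0, b 2} : Set 𝔤)) : Set 𝔤) ∧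
    IsInvolutive (↑(Submodule.span ℝ ({b 0, b 2} : Set 𝔤)) : Set 𝔤) := by
  have hΩ_apply := apply_eq_of_basis b hΩ
  have hpos : ∀ X : 𝔤, X ≠ 0 → 0 < Ω X (j X) := fun X hX => by
    rw [apply_self_apply_eq_sum_sq b hΩ hj0 hj1 hj2 hj3]
    exact b.sum_sq_repr_pos hX
  have hb1 : b 1 ∈ span ℝ {b 1, b 3} := subset_span (by simp)
  have hlie_mem : ∀ X Y : 𝔤, ⁅X, Y⁆ ∈ span ℝ {b 1, b 3} := fun X Y => by
    rw [lie_eq_smul_of_basis b hbr]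
    exact smul_mem _ _ hb1
  refine ⟨fun X => eq_zero_of_forall_apply_eq_zero_of_pos Ω j hpos, ?cocycle,
    fun X => by simpa using LinearMap.congr_fun (comp_self_eq_neg_id_of_basis b hj0 hj1 hj2 hj3) X,
    LinearMap.congr_fun₂ (compl₁₂_eq_of_basis b hΩ hj0 hj1 hj2 hj3), hpos, ?nijenhuis,
    isInvolutive_of_lie_mem hlie_mem, ?orthogonal, isInvolutive_span_pair (by simp [hbr])⟩
  case cocycle =>
    intro X Y Z
    have hΩ_one : ∀ Z : 𝔤, Ω (b 1) Z = b.repr Z 3 := fun Z => by simp [hΩ_apply]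
    simp only [lie_eq_smul_of_basis b hbr, map_smul, LinearMap.smul_apply, smul_eq_mul, hΩ_one]
    ring
  case nijenhuis =>
    refine le_antisymm (span_le.mpr ?_) (span_le.mpr ?_)
    · rintro v ⟨X, Y, rfl⟩
      exact algNijenhuis_mem hlie_mem (fun w => apply_mem_span_one_three b hj1 hj3) X Y
    · have hN01 : algNijenhuis j (b 0) (b 1) = b 1 := by simp [algNijenhuis, hj0, hj1, hbr]
      have hN03 : algNijenhuis j (b 0) (b 3) = -b 3 := by simp [algNijenhuis, hj0, hj1, hj3, hbr]
      rintro v (rfl | rfl)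
      · exact subset_span ⟨b 0, b 1, hN01.symm⟩
      · exact neg_neg (b 3) ▸ neg_mem (subset_span ⟨b 0, b 3, hN03.symm⟩)
  case orthogonal =>
    ext X
    rw [Set.mem_ofPred_eq, forall_mem_span_apply_eq_zero_iff, SetLike.mem_coe,
      mem_span_zero_two_iff]
    simp [hΩ_apply, and_comm]
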